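/- arXiv:2010.12687 — 5 statements merged into one kernel-verified Lean document; each statement's English description precedes it below -/
import Mathlib

section
/- Let μ be a probability measure on ℝⁿ and x_1, …, x_N ∈ ℝⁿ, and let V be the N×N matrix with entries V(i,j) = μ({x ∈ ℝⁿ : x^k ≥ max(x_i^k, x_j^k) for all k}). Then V is positive semidefinite: for every l_1, …, l_N ∈ ℝ, ∑_{i=1}^N ∑_{j=1}^N l_i l_j V(i,j) ≥ 0. -/
/-! The quadratic form `∑ i j, l i * l j * μ (A i ∩ A j)` is `∫ (∑ i, l i * 1_{A i})²`, since
`1_{A i} * 1_{A j} = 1_{A i ∩ A j}`; hence it is nonnegative. The V-matrix has this form, because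
the set defining `V i j` is the intersection of the upper orthants `Ici (xs i)` and `Ici (xs j)`. -/

open MeasureTheory Finset

theorem sum_mul_measureReal_inter_nonneg {α ι : Type*} [MeasurableSpace α] [Fintype ι]
    (μ : Measure α) [IsFiniteMeasure μ] {A : ι → Set α} (hA : ∀ i, MeasurableSet (A i))
    (l : ι → ℝ) :
    0 ≤ ∑ i, ∑ j, l i * l j * μ.real (A i ∩ A j) := by
  have hint (i j : ι) : Integrable (fun x => l i * l j * (A i ∩ A j).indicator 1 x) μ :=
    ((integrable_const 1).indicator ((hA i).inter (hA j))).const_mul _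
  calc 0 ≤ ∫ x, (∑ i, l i * (A i).indicator 1 x) ^ 2 ∂μ :=
        integral_nonneg fun _ => sq_nonneg _
    _ = ∫ x, ∑ i, ∑ j, l i * l j * (A i ∩ A j).indicator 1 x ∂μ := by
        congr with x
        simp_rw [sq, sum_mul_sum, Set.inter_indicator_one, Pi.mul_apply, mul_mul_mul_comm]
    _ = ∑ i, ∑ j, l i * l j * μ.real (A i ∩ A j) := by
        rw [integral_finsetSum _ fun i _ => integrable_finsetSum _ fun j _ => hint i j]
        simp_rw [integral_finsetSum _ fun j _ => hint _ j, integral_const_mul,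
          integral_indicator_one ((hA _).inter (hA _))]

/-- The V-matrix `V i j = μ {x | ∀ k, x k ≥ max (xs i k) (xs j k)}`
built from a probability measure `μ` on `ℝⁿ` is positive semidefinite:
`∑ i ∑ j, l i · l j · V i j ≥ 0` for all reals `l₁, …, l_N`. -/
theorem V_matrix_posSemidef (n N : ℕ) (μ : Measure (Fin n → ℝ))
    [IsProbabilityMeasure μ] (xs : Fin N → Fin n → ℝ) (l : Fin N → ℝ) :
    0 ≤ ∑ i : Fin N, ∑ j : Fin N,
          l i * l j * (μ {x : Fin n → ℝ | ∀ k, max (xs i k) (xs j k) ≤ x k}).toReal := by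
  have hV (i j : Fin N) :
      {x : Fin n → ℝ | ∀ k, max (xs i k) (xs j k) ≤ x k} = Set.Ici (xs i) ∩ Set.Ici (xs j) := by
    rw [Set.Ici_inter_Ici]
    rfl
  simp_rw [hV, ← measureReal_def]
  exact sum_mul_measureReal_inter_nonneg μ (fun _ => measurableSet_Ici) l
end

section
/- Let ν be a probability measure on ℝ with ν({x}) = 0 for every x ∈ ℝ (i.e., with continuous cumulative distribution function). Let M ≥ 1, x_1, …, x_N ∈ ℝ, and l_1, …, l_N ∈ ℝ. Define V(i,j) = ν([max(x_i, x_j), ∞)), and for a sample t = (t_1, …, t_M) ∈ ℝ^M define V̂_t(i,j) = (1/M) ∑_{q=1}^M 1{t_q ≥ max(x_i, x_j)}, and for an N×N matrix W define ρ²(W) = (1/N²) ∑_{i,j=1}^N l_i l_j W(i,j). Then ν^⊗M({t ∈ ℝ^M : |ρ²(V) − ρ²(V̂_t)| ≤ √(log M / M) · (1/N²) ∑_{i,j=1}^N |l_i l_j|}) ≥ 1 − 2/M². -/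
/-!
With `F x = ∑ᵢⱼ lᵢ lⱼ 1{max(xᵢ, xⱼ) ≤ x} = (∑ᵢ lᵢ 1{xᵢ ≤ x})²`, the quantities `ρ²(V)` and
`ρ²(V̂_t)` are `N⁻²` times the `ν`-mean of `F` and its empirical mean over the sample `t`.
Being a square, `F` takes values in `[0, ∑ᵢⱼ |lᵢ lⱼ|]`, so Hoeffding's inequality for the
i.i.d. variables `F (t q)` at deviation `M · √(log M / M) · ∑ᵢⱼ |lᵢ lⱼ|` bounds the two-sided
tail by `2 exp (-2 log M) = 2 / M²`.
-/

open MeasureTheory ProbabilityTheory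
open scoped ENNReal NNReal

namespace ProbabilityTheory.HasSubgaussianMGF

variable {Ω : Type*} {mΩ : MeasurableSpace Ω} {μ : Measure Ω}
  {X : Ω → ℝ} {c : ℝ≥0}

lemma measure_abs_ge_le (h : HasSubgaussianMGF X c μ) {ε : ℝ} (hε : 0 ≤ ε) :
    μ.real {ω | ε ≤ |X ω|} ≤ 2 * Real.exp (-ε ^ 2 / (2 * c)) := by
  have h_split : {ω | ε ≤ |X ω|} = {ω | ε ≤ X ω} ∪ {ω | ε ≤ (-X) ω} := by
    ext ω; simp [le_abs]
  calc μ.real {ω | ε ≤ |X ω|}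
      ≤ μ.real {ω | ε ≤ X ω} + μ.real {ω | ε ≤ (-X) ω} := h_split ▸ measureReal_union_le _ _
    _ ≤ _ := by linarith [h.measure_ge_le hε, h.neg.measure_ge_le hε]

end ProbabilityTheory.HasSubgaussianMGF

namespace ProbabilityTheory

variable {α ι : Type*} [MeasurableSpace α] [Fintype ι] (ν : Measure α) [IsProbabilityMeasure ν]
  {h : α → ℝ} {a b : ℝ}

lemma measureReal_abs_sum_sub_integral_ge_le (hh : Measurable h) (hab : ∀ x, h x ∈ Set.Icc a b)
    {ε : ℝ} (hε : 0 ≤ ε) :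
    (Measure.pi fun _ : ι => ν).real
        {t | ε ≤ |∑ q, h (t q) - Fintype.card ι * ∫ x, h x ∂ν|}
      ≤ 2 * Real.exp (-2 * ε ^ 2 / (Fintype.card ι * (b - a) ^ 2)) := by
  have h_subG (q : ι) : HasSubgaussianMGF (fun t : ι → α => h (t q) - ∫ x, h x ∂ν)
      ((‖b - a‖₊ / 2) ^ 2) (Measure.pi fun _ => ν) := by
    have h_centered := hasSubgaussianMGF_of_mem_Icc (μ := Measure.pi fun _ : ι => ν)
      (X := fun t => h (t q)) (hh.comp (measurable_pi_apply q)).aemeasurable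
      (ae_of_all _ fun t => hab (t q))
    rwa [integral_comp_eval (μ := fun _ => ν) hh.aestronglyMeasurable] at h_centered
  have h_indep : iIndepFun (fun q (t : ι → α) => h (t q) - ∫ x, h x ∂ν)
      (Measure.pi fun _ => ν) :=
    iIndepFun_pi (X := fun _ x => h x - ∫ x, h x ∂ν) fun _ => (hh.sub_const _).aemeasurable
  have h_tail := (HasSubgaussianMGF.sum_of_iIndepFun h_indep (s := Finset.univ)
    fun q _ => h_subG q).measure_abs_ge_le hε
  convert h_tail using 3
  · simp [Finset.sum_sub_distrib]
  · have h_var : 2 * ((∑ _ : ι, (‖b - a‖₊ / 2) ^ 2 : ℝ≥0) : ℝ)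
        = Fintype.card ι * (b - a) ^ 2 / 2 := by
      push_cast
      simp only [Finset.sum_const, Finset.card_univ, nsmul_eq_mul, Real.norm_eq_abs,
        div_pow, sq_abs]
      ring
    rw [h_var, div_div_eq_mul_div]
    ring

lemma one_sub_le_measure_abs_sum_sub_integral_le (hh : Measurable h)
    (hab : ∀ x, h x ∈ Set.Icc a b) {ε : ℝ} (hε : 0 ≤ ε) :
    1 - ENNReal.ofReal (2 * Real.exp (-2 * ε ^ 2 / (Fintype.card ι * (b - a) ^ 2)))
      ≤ (Measure.pi fun _ : ι => ν) {t | |∑ q, h (t q) - Fintype.card ι * ∫ x, h x ∂ν| ≤ ε} := by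
  set S : (ι → α) → ℝ := fun t => |∑ q, h (t q) - Fintype.card ι * ∫ x, h x ∂ν|
  have hS : Measurable S := by fun_prop
  have h_compl : {t | S t ≤ ε}ᶜ ⊆ {t | ε ≤ S t} := fun t (ht : ¬S t ≤ ε) => (not_le.mp ht).le
  have h_meas : MeasurableSet {t | S t ≤ ε}ᶜ := (measurableSet_le hS measurable_const).compl
  change _ ≤ (Measure.pi fun _ : ι => ν) {t | S t ≤ ε}
  rw [← compl_compl {t | S t ≤ ε}, prob_compl_eq_one_sub h_meas]
  gcongr
  calc (Measure.pi fun _ : ι => ν) {t | S t ≤ ε}ᶜ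
      ≤ (Measure.pi fun _ : ι => ν) {t | ε ≤ S t} := measure_mono h_compl
    _ = ENNReal.ofReal ((Measure.pi fun _ : ι => ν).real {t | ε ≤ S t}) :=
      (ofReal_measureReal).symm
    _ ≤ _ := ENNReal.ofReal_le_ofReal (measureReal_abs_sum_sub_integral_ge_le ν hh hab hε)

lemma one_sub_two_div_sq_le_measure_abs_sum_sub_integral_le (hh : Measurable h) {L : ℝ}
    (hL : ∀ x, h x ∈ Set.Icc 0 L) {M : ℕ} (hM : 1 ≤ M) :
    1 - 2 / (M : ℝ≥0∞) ^ 2 ≤ (Measure.pi fun _ : Fin M => ν)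
      {t | |∑ q, h (t q) - M * ∫ x, h x ∂ν| ≤ M * (Real.sqrt (Real.log M / M) * L)} := by
  obtain ⟨x₀⟩ := nonempty_of_isProbabilityMeasure ν
  obtain hL0 | hL0 := ((hL x₀).1.trans (hL x₀).2).eq_or_lt
  · have h_zero : h = 0 := funext fun x => le_antisymm ((hL x).2.trans hL0.symm.le) (hL x).1
    simp [h_zero, ← hL0]
  have hM_pos : (0 : ℝ) < M := by exact_mod_cast hM
  have h_log : 0 ≤ Real.log M / M := div_nonneg (Real.log_nonneg (by exact_mod_cast hM)) hM_pos.le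
  have h_exponent : -2 * (M * (Real.sqrt (Real.log M / M) * L)) ^ 2 / (M * (L - 0) ^ 2)
      = -(2 * Real.log M) := by
    rw [sub_zero, mul_pow, mul_pow, Real.sq_sqrt h_log]
    field_simp
  have h_bound : ENNReal.ofReal (2 * Real.exp (-(2 * Real.log M))) = 2 / (M : ℝ≥0∞) ^ 2 := by
    have h_log_sq : 2 * Real.log M = Real.log ((M : ℝ) ^ 2) := by simp [Real.log_pow]
    rw [Real.exp_neg, h_log_sq, Real.exp_log (by positivity), ← div_eq_mul_inv,
      ENNReal.ofReal_div_of_pos (by positivity)]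
    norm_cast
  have h_hoeffding := one_sub_le_measure_abs_sum_sub_integral_le (ι := Fin M) ν hh hL
    (ε := M * (Real.sqrt (Real.log M / M) * L)) (by positivity)
  rwa [Fintype.card_fin, h_exponent, h_bound] at h_hoeffding

end ProbabilityTheory

section IndicatorQuadForm

variable {ι : Type*} [Fintype ι] (xs l : ι → ℝ)

noncomputable def indicatorQuadForm (x : ℝ) : ℝ :=
  ∑ i, ∑ j, l i * l j * if max (xs i) (xs j) ≤ x then 1 else 0

lemma indicatorQuadForm_eq_sq (x : ℝ) :
    indicatorQuadForm xs l x = (∑ i, l i * if xs i ≤ x then 1 else 0) ^ 2 := by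
  rw [sq, Finset.sum_mul_sum]
  refine Finset.sum_congr rfl fun i _ => Finset.sum_congr rfl fun j _ => ?_
  by_cases hi : xs i ≤ x <;> by_cases hj : xs j ≤ x <;> simp [hi, hj]

lemma indicatorQuadForm_mem_Icc (x : ℝ) :
    indicatorQuadForm xs l x ∈ Set.Icc 0 (∑ i, ∑ j, |l i * l j|) := by
  refine ⟨indicatorQuadForm_eq_sq xs l x ▸ sq_nonneg _,
    Finset.sum_le_sum fun i _ => Finset.sum_le_sum fun j _ => ?_⟩
  split_ifs
  · simpa using le_abs_self (l i * l j)
  · simpa using abs_nonneg (l i * l j)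

lemma measurable_indicatorQuadForm : Measurable (indicatorQuadForm xs l) := by
  refine Finset.measurable_sum _ fun i _ => Finset.measurable_sum _ fun j _ => ?_
  exact (Measurable.ite measurableSet_Ici measurable_const measurable_const).const_mul _

lemma integral_indicatorQuadForm (ν : Measure ℝ) [IsFiniteMeasure ν] :
    ∫ x, indicatorQuadForm xs l x ∂ν
      = ∑ i, ∑ j, l i * l j * (ν (Set.Ici (max (xs i) (xs j)))).toReal := by
  have h_ite (a : ℝ) : (fun x : ℝ => if a ≤ x then (1 : ℝ) else 0) = (Set.Ici a).indicator 1 := by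
    ext x; simp [Set.indicator_apply]
  have h_int (a : ℝ) : Integrable (fun x : ℝ => if a ≤ x then (1 : ℝ) else 0) ν := by
    rw [h_ite]; exact (integrable_const 1).indicator measurableSet_Ici
  simp only [indicatorQuadForm]
  rw [integral_finsetSum _ fun i _ => integrable_finsetSum _ fun j _ => (h_int _).const_mul _]
  refine Finset.sum_congr rfl fun i _ => ?_
  rw [integral_finsetSum _ fun j _ => (h_int _).const_mul _]
  refine Finset.sum_congr rfl fun j _ => ?_
  rw [integral_const_mul, h_ite, integral_indicator_one measurableSet_Ici, measureReal_def]

lemma sum_mul_mul_sum_ite_eq {κ : Type*} [Fintype κ] (c : ℝ) (t : κ → ℝ) :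
    ∑ i, ∑ j, l i * l j * (c * ∑ q, if max (xs i) (xs j) ≤ t q then 1 else 0)
      = c * ∑ q, indicatorQuadForm xs l (t q) := by
  simp only [indicatorQuadForm, Finset.mul_sum]
  conv_rhs => rw [Finset.sum_comm]
  refine Finset.sum_congr rfl fun i _ => ?_
  conv_rhs => rw [Finset.sum_comm]
  exact Finset.sum_congr rfl fun j _ => Finset.sum_congr rfl fun q _ => by ring

end IndicatorQuadForm

theorem rho_sq_concentration_one_dim_general (N M : ℕ)
    (ν : Measure ℝ) [IsProbabilityMeasure ν]
    (xs : Fin N → ℝ) (l : Fin N → ℝ) :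
    (1 : ℝ≥0∞) - 2 / (M : ℝ≥0∞) ^ 2
      ≤ Measure.pi (fun _ : Fin M => ν)
          {t : Fin M → ℝ |
            |((1 / (N : ℝ) ^ 2) * ∑ i : Fin N, ∑ j : Fin N,
                l i * l j * (ν (Set.Ici (max (xs i) (xs j)))).toReal)
              - ((1 / (N : ℝ) ^ 2) * ∑ i : Fin N, ∑ j : Fin N,
                l i * l j * ((1 / (M : ℝ)) * ∑ q : Fin M,
                  (if max (xs i) (xs j) ≤ t q then (1:ℝ) else 0)))|
            ≤ Real.sqrt (Real.log M / M)
                * ((1 / (N : ℝ) ^ 2) * ∑ i : Fin N, ∑ j : Fin N, |l i * l j|)} := by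
  rcases Nat.lt_or_ge M 1 with hM | hM
  -- for `M = 0` the left side is `1 - 2 / 0 = 1 - ⊤ = 0` in `ℝ≥0∞`
  · simp [Nat.lt_one_iff.mp hM, ENNReal.div_zero]
  set F := indicatorQuadForm xs l
  set L := ∑ i, ∑ j, |l i * l j|
  set ε := Real.sqrt (Real.log M / M)
  refine (one_sub_two_div_sq_le_measure_abs_sum_sub_integral_le ν
    (measurable_indicatorQuadForm xs l) (indicatorQuadForm_mem_Icc xs l) hM).trans
    (measure_mono fun t (ht : |∑ q, F (t q) - M * ∫ x, F x ∂ν| ≤ M * (ε * L)) => ?_)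
  rw [Set.mem_ofPred_eq, sum_mul_mul_sum_ite_eq, ← integral_indicatorQuadForm]
  have hM_pos : (0 : ℝ) < M := by exact_mod_cast hM
  have h_factor : ∀ c μ S : ℝ, c * μ - c * (1 / M * S) = -(c / M) * (S - M * μ) := by
    intro c μ S; field_simp; ring
  rw [h_factor, abs_mul, abs_neg, abs_of_nonneg (by positivity)]
  calc 1 / (N : ℝ) ^ 2 / M * |∑ q, F (t q) - M * ∫ x, F x ∂ν|
      ≤ 1 / (N : ℝ) ^ 2 / M * (M * (ε * L)) := by gcongr
    _ = ε * (1 / (N : ℝ) ^ 2 * L) := by field_simp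

/-- Let `ν` be an atomless (continuous CDF) probability measure on `ℝ`,
`M ≥ 1`, `x₁, …, x_N ∈ ℝ`, `l₁, …, l_N ∈ ℝ`. With `V i j = ν [max (xs i) (xs j), ∞)`,
`V̂_t i j = (1/M) ∑ q, 1{t q ≥ max (xs i) (xs j)}` and
`ρ²(W) = (1/N²) ∑ i ∑ j, l i · l j · W i j`, the probability under `ν^⊗M` that
`|ρ²(V) − ρ²(V̂_t)| ≤ √(log M / M) · (1/N²) ∑ᵢⱼ |lᵢ lⱼ|` is at least `1 − 2/M²`. -/
theorem rho_sq_concentration_one_dim (N M : ℕ) (hM : 1 ≤ M)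
    (ν : Measure ℝ) [IsProbabilityMeasure ν] (hcont : ∀ x : ℝ, ν {x} = 0)
    (xs : Fin N → ℝ) (l : Fin N → ℝ) :
    (1 : ℝ≥0∞) - 2 / (M : ℝ≥0∞) ^ 2
      ≤ Measure.pi (fun _ : Fin M => ν)
          {t : Fin M → ℝ |
            |((1 / (N : ℝ) ^ 2) * ∑ i : Fin N, ∑ j : Fin N,
                l i * l j * (ν (Set.Ici (max (xs i) (xs j)))).toReal)
              - ((1 / (N : ℝ) ^ 2) * ∑ i : Fin N, ∑ j : Fin N,
                l i * l j * ((1 / (M : ℝ)) * ∑ q : Fin M,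
                  (if max (xs i) (xs j) ≤ t q then (1:ℝ) else 0)))|
            ≤ Real.sqrt (Real.log M / M)
                * ((1 / (N : ℝ) ^ 2) * ∑ i : Fin N, ∑ j : Fin N, |l i * l j|)} :=
  rho_sq_concentration_one_dim_general N M ν xs l
end

section
/- Let ν be a probability measure on ℝⁿ, let M ≥ 1, let x_1, …, x_N ∈ ℝⁿ, and let δ > 0. Define V(i,j) = ν({t ∈ ℝⁿ : t^k ≥ max(x_i^k, x_j^k) for all k}) and, for t = (t_1, …, t_M) ∈ (ℝⁿ)^M, V̂_t(i,j) = (1/M) ∑_{q=1}^M 1{t_q^k ≥ max(x_i^k, x_j^k) for all k}. Then ν^⊗M({t : (1/N²) ∑_{i,j=1}^N |V(i,j) − V̂_t(i,j)| ≤ δ}) ≥ 1 − N(N+1)·exp(−2Mδ²). -/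
/-!
Each entry `V̂_t(i,j)` is the empirical frequency, over `M` independent samples, of the event
`{s | max (x_i, x_j) ≤ s}`, whose probability is `V(i,j)`. By Hoeffding's inequality it deviates
from `V(i,j)` by more than `δ` with probability at most `2 exp (-2Mδ²)`. If the average deviation
exceeds `δ`, some entry deviates by more than `δ`, and since both matrices are symmetric a union
bound over the `N(N+1)/2` unordered pairs `{i, j}` gives the claim.
-/

open MeasureTheory
open scoped ENNReal

open Real ProbabilityTheory NNReal

namespace ProbabilityTheory.HasSubgaussianMGF

lemma measureReal_abs_ge_le {Ω : Type*} [MeasurableSpace Ω] {μ : Measure Ω}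
    {X : Ω → ℝ} {c : ℝ≥0} (h : HasSubgaussianMGF X c μ) {ε : ℝ} (hε : 0 ≤ ε) :
    μ.real {ω | ε ≤ |X ω|} ≤ 2 * exp (-ε ^ 2 / (2 * c)) := by
  have : IsFiniteMeasure μ :=
    (integrable_const_iff_isFiniteMeasure one_ne_zero).1 (by simpa using h.integrable_exp_mul 0)
  have h_split : {ω | ε ≤ |X ω|} = {ω | ε ≤ X ω} ∪ {ω | ε ≤ (-X) ω} := by
    ext ω
    simp [le_abs', le_neg, or_comm]
  calc μ.real {ω | ε ≤ |X ω|}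
      ≤ μ.real {ω | ε ≤ X ω} + μ.real {ω | ε ≤ (-X) ω} := h_split ▸ measureReal_union_le _ _
    _ ≤ exp (-ε ^ 2 / (2 * c)) + exp (-ε ^ 2 / (2 * c)) :=
        add_le_add (h.measure_ge_le hε) (h.neg.measure_ge_le hε)
    _ = 2 * exp (-ε ^ 2 / (2 * c)) := (two_mul _).symm

end ProbabilityTheory.HasSubgaussianMGF

lemma hasSubgaussianMGF_sum_sub_integral_pi {E ι : Type*} [MeasurableSpace E] {ν : Measure E}
    [IsProbabilityMeasure ν] [Fintype ι] {f : E → ℝ} (hf : Measurable f) {a b : ℝ}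
    (hfab : ∀ x, f x ∈ Set.Icc a b) :
    HasSubgaussianMGF (fun t : ι → E => ∑ q, (f (t q) - ν[f]))
      (Fintype.card ι * (‖b - a‖₊ / 2) ^ 2) (Measure.pi fun _ => ν) := by
  have h_indep : iIndepFun (fun q (t : ι → E) => f (t q) - ν[f]) (Measure.pi fun _ => ν) :=
    iIndepFun_pi (X := fun _ x => f x - ν[f]) fun _ => (hf.sub_const _).aemeasurable
  have h_subG (q : ι) : HasSubgaussianMGF (fun t : ι → E => f (t q) - ν[f])
      ((‖b - a‖₊ / 2) ^ 2) (Measure.pi fun _ => ν) := by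
    refine HasSubgaussianMGF.of_map (X := fun x => f x - ν[f]) (Y := fun t : ι → E => t q)
      (measurable_pi_apply q).aemeasurable ?_
    rw [(measurePreserving_eval _ q).map_eq]
    exact hasSubgaussianMGF_of_mem_Icc hf.aemeasurable (ae_of_all _ hfab)
  simpa using HasSubgaussianMGF.sum_of_iIndepFun h_indep (s := Finset.univ) fun q _ => h_subG q

lemma measure_abs_integral_sub_empiricalMean_gt_le {E : Type*} [MeasurableSpace E]
    (ν : Measure E) [IsProbabilityMeasure ν] {f : E → ℝ} (hf : Measurable f)
    (hf01 : ∀ x, f x ∈ Set.Icc 0 1) {M : ℕ} (hM : 0 < M) {δ : ℝ} (hδ : 0 ≤ δ) :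
    Measure.pi (fun _ : Fin M => ν) {t | δ < |ν[f] - (1 / M) * ∑ q, f (t q)|}
      ≤ ENNReal.ofReal (2 * exp (-2 * M * δ ^ 2)) := by
  have hM' : (0 : ℝ) < M := Nat.cast_pos.2 hM
  have h_subset : {t : Fin M → E | δ < |ν[f] - (1 / M) * ∑ q, f (t q)|}
      ⊆ {t | M * δ ≤ |∑ q, (f (t q) - ν[f])|} := by
    intro t ht
    have h_eq : ν[f] - (1 / M) * ∑ q, f (t q) = -(∑ q, (f (t q) - ν[f])) / M := by
      simp only [Finset.sum_sub_distrib, Finset.sum_const, Finset.card_univ, Fintype.card_fin,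
        nsmul_eq_mul]
      field_simp
      ring
    simp only [Set.mem_ofPred_eq, h_eq, abs_div, abs_neg, abs_of_pos hM', lt_div_iff₀ hM'] at ht ⊢
    linarith
  have h_tail := (hasSubgaussianMGF_sum_sub_integral_pi (ι := Fin M) (ν := ν) hf hf01)
    |>.measureReal_abs_ge_le (mul_nonneg hM'.le hδ)
  have h_param : ((Fintype.card (Fin M) * (‖(1 : ℝ) - 0‖₊ / 2) ^ 2 : ℝ≥0) : ℝ) = M / 4 := by
    norm_num [div_eq_mul_one_div (M : ℝ)]
  rw [h_param] at h_tail
  calc _ ≤ _ := measure_mono h_subset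
    _ = ENNReal.ofReal (Measure.real _ _) := (ofReal_measureReal (measure_ne_top _ _)).symm
    _ ≤ _ := ENNReal.ofReal_le_ofReal (h_tail.trans_eq (by field_simp; ring_nf))

lemma measure_iUnion_iUnion_le_card_sym2_mul {Ω α : Type*} [MeasurableSpace Ω] [Fintype α]
    (μ : Measure Ω) {A : α → α → Set Ω} (hA : ∀ i j, A i j = A j i) {b : ℝ≥0∞}
    (hb : ∀ i j, μ (A i j) ≤ b) :
    μ (⋃ i, ⋃ j, A i j) ≤ Fintype.card (Sym2 α) * b := by
  let B : Sym2 α → Set Ω := Sym2.lift ⟨A, hA⟩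
  have h_union : ⋃ i, ⋃ j, A i j = ⋃ z, B z := by
    ext ω
    simp only [Set.mem_iUnion]
    exact ⟨fun ⟨i, j, h⟩ => ⟨s(i, j), h⟩, fun ⟨z, h⟩ => z.ind (fun i j h => ⟨i, j, h⟩) h⟩
  calc μ (⋃ i, ⋃ j, A i j) ≤ ∑ z, μ (B z) := h_union ▸ measure_iUnion_fintype_le μ B
    _ ≤ ∑ _z : Sym2 α, b := Finset.sum_le_sum fun z _ => z.ind (fun i j => hb i j)
    _ = Fintype.card (Sym2 α) * b := by simp

lemma card_sym2_fin_mul_ofReal_two_mul (N : ℕ) (x : ℝ) :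
    Fintype.card (Sym2 (Fin N)) * ENNReal.ofReal (2 * x) = ENNReal.ofReal (N * (N + 1) * x) := by
  have h_card : (Fintype.card (Sym2 (Fin N)) : ℝ) * 2 = N * (N + 1) := by
    rw [Sym2.card, Fintype.card_fin]
    exact_mod_cast (Nat.add_one_mul_choose_eq N 1).symm.trans
      (by rw [Nat.choose_one_right, mul_comm])
  rw [← ENNReal.ofReal_natCast, ← ENNReal.ofReal_mul (by positivity), ← h_card, mul_assoc]

lemma exists_lt_of_lt_mean_sum_sum {α : Type*} [Fintype α] {a : α → α → ℝ} {δ : ℝ}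
    (hδ : 0 ≤ δ) (h : δ < 1 / (Fintype.card α : ℝ) ^ 2 * ∑ i, ∑ j, a i j) :
    ∃ i j, δ < a i j := by
  by_contra! h_le
  have h_sum : ∑ i, ∑ j, a i j ≤ (Fintype.card α : ℝ) ^ 2 * δ := by
    calc ∑ i, ∑ j, a i j ≤ ∑ _i : α, ∑ _j : α, δ := by gcongr with i _ j _; exact h_le i j
      _ = (Fintype.card α : ℝ) ^ 2 * δ := by simp; ring
  rcases eq_or_ne (Fintype.card α) 0 with h_card | h_card
  · simp [h_card] at h
    linarith
  · rw [one_div_mul_eq_div, lt_div_iff₀ (by positivity), mul_comm] at h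
    linarith

lemma measure_abs_measureReal_sub_empiricalFreq_gt_le {E : Type*} [MeasurableSpace E]
    (ν : Measure E) [IsProbabilityMeasure ν] {S : Set E} (hS : MeasurableSet S) {M : ℕ}
    (hM : 0 < M) {δ : ℝ} (hδ : 0 ≤ δ) :
    Measure.pi (fun _ : Fin M => ν) {t | δ < |ν.real S - (1 / M) * ∑ q, S.indicator 1 (t q)|}
      ≤ ENNReal.ofReal (2 * exp (-2 * M * δ ^ 2)) := by
  have h01 (x : E) : S.indicator (1 : E → ℝ) x ∈ Set.Icc 0 1 := by
    by_cases hx : x ∈ S <;> simp [hx]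
  simpa only [integral_indicator_one hS] using
    measure_abs_integral_sub_empiricalMean_gt_le ν (measurable_one.indicator hS) h01 hM hδ

/-- With `V i j = ν {t | ∀ k, t k ≥ max (xs i k) (xs j k)}` and
`V̂_t i j = (1/M) ∑ q, 1{t q ≥ max coordinatewise}`, the probability under `ν^⊗M`
that `(1/N²) ∑ᵢⱼ |V i j − V̂_t i j| ≤ δ` is at least `1 − N(N+1) exp(−2Mδ²)`. -/
theorem empirical_V_matrix_concentration (n N M : ℕ) (hM : 1 ≤ M)
    (ν : Measure (Fin n → ℝ)) [IsProbabilityMeasure ν]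
    (xs : Fin N → Fin n → ℝ) (δ : ℝ) (hδ : 0 < δ) :
    (1 : ℝ≥0∞) - ENNReal.ofReal ((N : ℝ) * (N + 1) * Real.exp (-2 * M * δ ^ 2))
      ≤ Measure.pi (fun _ : Fin M => ν)
          {t : Fin M → (Fin n → ℝ) |
            (1 / (N : ℝ) ^ 2) * ∑ i : Fin N, ∑ j : Fin N,
              |(ν {s : Fin n → ℝ | ∀ k, max (xs i k) (xs j k) ≤ s k}).toReal
                - (1 / (M : ℝ)) * ∑ q : Fin M,
                    (if ∀ k, max (xs i k) (xs j k) ≤ t q k then (1:ℝ) else 0)|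
            ≤ δ} := by
  set S : Fin N → Fin N → Set (Fin n → ℝ) :=
    fun i j => {s | ∀ k, max (xs i k) (xs j k) ≤ s k} with hS
  have h_ind (i j : Fin N) (y : Fin n → ℝ) :
      (if ∀ k, max (xs i k) (xs j k) ≤ y k then (1 : ℝ) else 0) = (S i j).indicator 1 y := by
    simp only [Set.indicator_apply, hS, Set.mem_ofPred_eq, Pi.one_apply]
  simp only [h_ind]
  set μ := Measure.pi fun _ : Fin M => ν
  let bad (i j : Fin N) : Set (Fin M → Fin n → ℝ) :=
    {t | δ < |ν.real (S i j) - (1 / M) * ∑ q, (S i j).indicator 1 (t q)|}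
  have h_symm (i j : Fin N) : bad i j = bad j i := by simp only [bad, hS, max_comm (xs i _)]
  have h_bad (i j : Fin N) : μ (bad i j) ≤ ENNReal.ofReal (2 * exp (-2 * M * δ ^ 2)) :=
    measure_abs_measureReal_sub_empiricalFreq_gt_le ν
      (measurableSet_Ici (a := fun k => max (xs i k) (xs j k))) hM hδ.le
  set G := {t : Fin M → Fin n → ℝ | (1 / (N : ℝ) ^ 2) * ∑ i, ∑ j,
      |ν.real (S i j) - (1 / M) * ∑ q, (S i j).indicator 1 (t q)| ≤ δ}
  have h_compl : Gᶜ ⊆ ⋃ i, ⋃ j, bad i j := fun t ht =>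
    Set.mem_iUnion₂.2 (exists_lt_of_lt_mean_sum_sum hδ.le (by simpa [G] using ht))
  have h_bad_union : μ Gᶜ ≤ ENNReal.ofReal (N * (N + 1) * exp (-2 * M * δ ^ 2)) :=
    calc μ Gᶜ ≤ μ (⋃ i, ⋃ j, bad i j) := measure_mono h_compl
      _ ≤ Fintype.card (Sym2 (Fin N)) * ENNReal.ofReal (2 * exp (-2 * M * δ ^ 2)) :=
        measure_iUnion_iUnion_le_card_sym2_mul μ h_symm h_bad
      _ = _ := card_sym2_fin_mul_ofReal_two_mul N _
  rw [tsub_le_iff_right, ← measure_univ (μ := μ)]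
  exact (measure_univ_le_add_compl G).trans (add_le_add_right h_bad_union _)
end

section
/- Let ν be a probability measure on ℝⁿ, let M ≥ 1, let x_1, …, x_N ∈ ℝⁿ, let l_1, …, l_N ∈ ℝ, and let δ > 0. Define V(i,j) = ν({t ∈ ℝⁿ : t^k ≥ max(x_i^k, x_j^k) for all k}), for t = (t_1, …, t_M) ∈ (ℝⁿ)^M define V̂_t(i,j) = (1/M) ∑_{q=1}^M 1{t_q^k ≥ max(x_i^k, x_j^k) for all k}, and for an N×N matrix W define ρ²(W) = (1/N²) ∑_{i,j=1}^N l_i l_j W(i,j). Then, with δ' = δ · max_{1≤i,j≤N} |l_i l_j|, ν^⊗M({t : |ρ²(V) − ρ²(V̂_t)| ≤ δ'}) ≥ 1 − N(N+1)·exp(−2Mδ²). -/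
/-!
Each entry `V̂_t(i, j)` is the empirical mean of `M` i.i.d. indicators of the orthant
`Ici (xᵢ ⊔ xⱼ)` with mean `V(i, j)`, so by Hoeffding's inequality it is `δ`-close to `V(i, j)`
outside an event of probability at most `2 exp(-2Mδ²)`. The orthant depends only on the unordered
pair `{i, j}`, so a union bound over the `N(N+1)/2` elements of `Sym2 (Fin N)` makes all entries
`δ`-close simultaneously, and then `ρ²(V) - ρ²(V̂_t)` is bounded termwise.
-/

open MeasureTheory ProbabilityTheory
open scoped ENNReal

section Hoeffding

variable {E : Type*} [MeasurableSpace E] {μ : Measure E} [IsProbabilityMeasure μ]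
  {f : E → ℝ} {a b : ℝ}

lemma measureReal_pi_sum_sub_integral_ge_le (hf : Measurable f)
    (hfab : ∀ x, f x ∈ Set.Icc a b) (M : ℕ) {ε : ℝ} (hε : 0 ≤ ε) :
    (Measure.pi fun _ : Fin M => μ).real {t | ε ≤ ∑ q, (f (t q) - μ[f])}
      ≤ Real.exp (-2 * ε ^ 2 / (M * (b - a) ^ 2)) := by
  have hsubG : HasSubgaussianMGF (fun x => f x - μ[f]) ((‖b - a‖₊ / 2) ^ 2) μ :=
    hasSubgaussianMGF_of_mem_Icc hf.aemeasurable (ae_of_all _ hfab)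
  have hindep : iIndepFun (fun (q : Fin M) (t : Fin M → E) => f (t q) - μ[f])
      (Measure.pi fun _ => μ) :=
    iIndepFun_pi (X := fun _ x => f x - μ[f]) fun _ => (hf.sub_const _).aemeasurable
  have hsubG_pi (q : Fin M) : HasSubgaussianMGF (fun t : Fin M → E => f (t q) - μ[f])
      ((‖b - a‖₊ / 2) ^ 2) (Measure.pi fun _ => μ) :=
    HasSubgaussianMGF.of_map (X := fun x => f x - μ[f]) (measurable_pi_apply q).aemeasurable
      (by rw [(measurePreserving_eval (fun _ : Fin M => μ) q).map_eq]; exact hsubG)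
  refine (HasSubgaussianMGF.measure_sum_ge_le_of_iIndepFun hindep (fun q _ => hsubG_pi q)
    hε).trans_eq ?_
  congr 1
  simp only [Finset.sum_const, Finset.card_univ, Fintype.card_fin, nsmul_eq_mul]
  push_cast
  rw [Real.norm_eq_abs, div_pow, sq_abs,
    show (2 : ℝ) * (M * ((b - a) ^ 2 / 2 ^ 2)) = M * (b - a) ^ 2 / 2 by ring, div_div_eq_mul_div]
  ring

lemma measureReal_pi_abs_integral_sub_empiricalMean_gt_le (hf : Measurable f)
    (hfab : ∀ x, f x ∈ Set.Icc a b) {M : ℕ} (hM : 1 ≤ M) {δ : ℝ} (hδ : 0 ≤ δ) :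
    (Measure.pi fun _ : Fin M => μ).real {t | δ < |μ[f] - (1 / M) * ∑ q, f (t q)|}
      ≤ 2 * Real.exp (-2 * M * δ ^ 2 / (b - a) ^ 2) := by
  have hM0 : (0 : ℝ) < M := by exact_mod_cast hM
  have hsub : {t : Fin M → E | δ < |μ[f] - (1 / M) * ∑ q, f (t q)|}
      ⊆ {t | M * δ ≤ ∑ q, (f (t q) - μ[f])} ∪ {t | M * δ ≤ ∑ q, ((-f) (t q) - μ[-f])} := by
    intro t ht
    have hmean : (M : ℝ) * (1 / M * ∑ q, f (t q)) = ∑ q, f (t q) := by field_simp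
    simp only [Set.mem_union, Set.mem_ofPred_eq, Pi.neg_apply, integral_neg, Finset.sum_sub_distrib,
      Finset.sum_neg_distrib, Finset.sum_const, Finset.card_univ, Fintype.card_fin, nsmul_eq_mul]
      at ht ⊢
    rcases lt_abs.mp ht with h | h
    · right
      nlinarith
    · left
      nlinarith
  have htail : Real.exp (-2 * (M * δ) ^ 2 / (M * (b - a) ^ 2))
      = Real.exp (-2 * M * δ ^ 2 / (b - a) ^ 2) := by
    congr 1
    field_simp
  calc _ ≤ _ := measureReal_mono hsub
    _ ≤ _ := measureReal_union_le _ _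
    _ ≤ Real.exp (-2 * M * δ ^ 2 / (b - a) ^ 2) + Real.exp (-2 * M * δ ^ 2 / (b - a) ^ 2) := by
      gcongr
      · exact htail ▸ measureReal_pi_sum_sub_integral_ge_le hf hfab M (by positivity)
      · have hfab' (x : E) : (-f) x ∈ Set.Icc (-b) (-a) := by
          simpa [and_comm] using hfab x
        have := measureReal_pi_sum_sub_integral_ge_le (μ := μ) hf.neg hfab' M (mul_nonneg hM0.le hδ)
        rwa [show -a - -b = b - a by ring, htail] at this
    _ = _ := (two_mul _).symm

lemma one_sub_le_measure_pi_forall_abs_measureReal_sub_empiricalMean_le {ι : Type*} [Fintype ι]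
    {S : ι → Set E} (hS : ∀ i, MeasurableSet (S i)) {M : ℕ} (hM : 1 ≤ M) {δ : ℝ} (hδ : 0 ≤ δ) :
    1 - ENNReal.ofReal (2 * Fintype.card ι * Real.exp (-2 * M * δ ^ 2))
      ≤ Measure.pi (fun _ : Fin M => μ)
          {t | ∀ i, |μ.real (S i) - (1 / M) * ∑ q, (S i).indicator 1 (t q)| ≤ δ} := by
  set bad : ι → Set (Fin M → E) :=
    fun i => {t | δ < |μ.real (S i) - (1 / M) * ∑ q, (S i).indicator 1 (t q)|}
  have hbad_meas (i : ι) : MeasurableSet (bad i) :=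
    measurableSet_lt measurable_const (by
      have hq (q : Fin M) : Measurable fun t : Fin M → E => (S i).indicator (1 : E → ℝ) (t q) :=
        (measurable_one.indicator (hS i)).comp (measurable_pi_apply q)
      fun_prop)
  have hbad_le (i : ι) : (Measure.pi fun _ : Fin M => μ).real (bad i)
      ≤ 2 * Real.exp (-2 * M * δ ^ 2) := by
    have := measureReal_pi_abs_integral_sub_empiricalMean_gt_le (μ := μ)
      (measurable_one.indicator (hS i)) (a := 0) (b := 1)
      (fun x => by by_cases hx : x ∈ S i <;> simp [hx]) hM hδ
    simpa [bad, integral_indicator_one (hS i)] using this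
  have hgood : {t | ∀ i, |μ.real (S i) - (1 / M) * ∑ q, (S i).indicator 1 (t q)| ≤ δ}
      = (⋃ i, bad i)ᶜ := by
    ext t
    simp [bad]
  rw [hgood, prob_compl_eq_one_sub (MeasurableSet.iUnion hbad_meas),
    ← ofReal_measureReal]
  gcongr
  calc _ ≤ ∑ i, (Measure.pi fun _ : Fin M => μ).real (bad i) := measureReal_iUnion_fintype_le _
    _ ≤ ∑ _i : ι, 2 * Real.exp (-2 * M * δ ^ 2) := Finset.sum_le_sum fun i _ => hbad_le i
    _ = _ := by simp only [neg_mul, Finset.sum_const, Finset.card_univ, nsmul_eq_mul]; ring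

end Hoeffding

lemma abs_mul_le_iSup_iSup_abs_mul {ι : Type*} [Finite ι] (l : ι → ℝ) (i j : ι) :
    |l i * l j| ≤ ⨆ i, ⨆ j, |l i * l j| :=
  le_ciSup_of_le (Set.finite_range _).bddAbove i
    (le_ciSup (f := fun j => |l i * l j|) (Set.finite_range _).bddAbove j)

lemma abs_quadForm_sub_quadForm_le {ι : Type*} [Fintype ι] (l : ι → ℝ) {A B : ι → ι → ℝ} {δ : ℝ}
    (hδ : 0 ≤ δ) (hAB : ∀ i j, |A i j - B i j| ≤ δ) :
    |(1 / (Fintype.card ι : ℝ) ^ 2) * ∑ i, ∑ j, l i * l j * A i j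
        - (1 / (Fintype.card ι : ℝ) ^ 2) * ∑ i, ∑ j, l i * l j * B i j|
      ≤ δ * ⨆ i, ⨆ j, |l i * l j| := by
  set L := ⨆ i, ⨆ j, |l i * l j|
  have hL : 0 ≤ L := Real.iSup_nonneg fun i => Real.iSup_nonneg fun j => abs_nonneg _
  have hterm (i j : ι) : |l i * l j * (A i j - B i j)| ≤ L * δ := by
    rw [abs_mul]
    exact mul_le_mul (abs_mul_le_iSup_iSup_abs_mul l i j) (hAB i j) (abs_nonneg _) hL
  have hsum : |∑ i, ∑ j, l i * l j * (A i j - B i j)| ≤ (Fintype.card ι : ℝ) ^ 2 * (L * δ) := by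
    calc _ ≤ ∑ i, ∑ j, |l i * l j * (A i j - B i j)| :=
          (Finset.abs_sum_le_sum_abs _ _).trans
            (Finset.sum_le_sum fun i _ => Finset.abs_sum_le_sum_abs _ _)
      _ ≤ ∑ _i : ι, ∑ _j : ι, L * δ := by gcongr with i _ j _; exact hterm i j
      _ = _ := by simp only [Finset.sum_const, Finset.card_univ, nsmul_eq_mul]; ring
  rcases isEmpty_or_nonempty ι with hι | hι
  · simpa using mul_nonneg hδ hL
  have hdiff : ∑ i, ∑ j, l i * l j * A i j - ∑ i, ∑ j, l i * l j * B i j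
      = ∑ i, ∑ j, l i * l j * (A i j - B i j) := by
    simp only [mul_sub, Finset.sum_sub_distrib]
  calc _ = 1 / (Fintype.card ι : ℝ) ^ 2 * |∑ i, ∑ j, l i * l j * (A i j - B i j)| := by
        rw [← mul_sub, hdiff, abs_mul, abs_of_pos (by positivity)]
    _ ≤ 1 / (Fintype.card ι : ℝ) ^ 2 * ((Fintype.card ι : ℝ) ^ 2 * (L * δ)) := by gcongr
    _ = δ * L := by field_simp

theorem rho_sq_concentration_general (n N M : ℕ) (hM : 1 ≤ M)
    (ν : Measure (Fin n → ℝ)) [IsProbabilityMeasure ν]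
    (xs : Fin N → Fin n → ℝ) (l : Fin N → ℝ) (δ : ℝ) (hδ : 0 < δ) :
    (1 : ℝ≥0∞) - ENNReal.ofReal ((N : ℝ) * (N + 1) * Real.exp (-2 * M * δ ^ 2))
      ≤ Measure.pi (fun _ : Fin M => ν)
          {t : Fin M → (Fin n → ℝ) |
            |((1 / (N : ℝ) ^ 2) * ∑ i : Fin N, ∑ j : Fin N,
                l i * l j * (ν {s : Fin n → ℝ | ∀ k, max (xs i k) (xs j k) ≤ s k}).toReal)
              - ((1 / (N : ℝ) ^ 2) * ∑ i : Fin N, ∑ j : Fin N,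
                l i * l j * ((1 / (M : ℝ)) * ∑ q : Fin M,
                  (if ∀ k, max (xs i k) (xs j k) ≤ t q k then (1:ℝ) else 0)))|
            ≤ δ * ⨆ i : Fin N, ⨆ j : Fin N, |l i * l j|} := by
  set S : Sym2 (Fin N) → Set (Fin n → ℝ) :=
    fun z => Set.Ici (Sym2.lift ⟨fun i j => xs i ⊔ xs j, fun i j => sup_comm _ _⟩ z)
  have hS (i j : Fin N) (s : Fin n → ℝ) : s ∈ S s(i, j) ↔ ∀ k, max (xs i k) (xs j k) ≤ s k := by
    simp [S, Pi.le_def, forall_and]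
  have hV (i j : Fin N) :
      (ν {s : Fin n → ℝ | ∀ k, max (xs i k) (xs j k) ≤ s k}).toReal = ν.real (S s(i, j)) := by
    simp only [← hS]
    rfl
  have hV_hat (i j : Fin N) (s : Fin n → ℝ) :
      (if ∀ k, max (xs i k) (xs j k) ≤ s k then (1 : ℝ) else 0) = (S s(i, j)).indicator 1 s := by
    by_cases h : ∀ k, max (xs i k) (xs j k) ≤ s k
    · rw [if_pos h, Set.indicator_of_mem ((hS i j s).mpr h), Pi.one_apply]
    · rw [if_neg h, Set.indicator_of_notMem (mt (hS i j s).mp h)]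
  have hcard : 2 * (Fintype.card (Sym2 (Fin N)) : ℝ) = N * (N + 1) := by
    rw [Sym2.card, Nat.cast_choose_two, Fintype.card_fin]
    push_cast
    ring
  have hconc := one_sub_le_measure_pi_forall_abs_measureReal_sub_empiricalMean_le (μ := ν)
    (S := S) (fun _ => measurableSet_Ici) hM hδ.le
  rw [hcard] at hconc
  simp only [hV, hV_hat]
  refine hconc.trans (measure_mono fun t ht => ?_)
  have hρ := abs_quadForm_sub_quadForm_le l hδ.le (fun i j => ht s(i, j))
  rwa [Fintype.card_fin] at hρ

/-- With `V i j = ν {t | ∀ k, t k ≥ max (xs i k) (xs j k)}`,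
`V̂_t i j = (1/M) ∑ q, 1{t q ≥ max coordinatewise}`,
`ρ²(W) = (1/N²) ∑ᵢⱼ lᵢ lⱼ W i j` and `δ' = δ · maxᵢⱼ |lᵢ lⱼ|`, the probability under
`ν^⊗M` that `|ρ²(V) − ρ²(V̂_t)| ≤ δ'` is at least `1 − N(N+1) exp(−2Mδ²)`. -/
theorem rho_sq_concentration (n N M : ℕ) (hN : 1 ≤ N) (hM : 1 ≤ M)
    (ν : Measure (Fin n → ℝ)) [IsProbabilityMeasure ν]
    (xs : Fin N → Fin n → ℝ) (l : Fin N → ℝ) (δ : ℝ) (hδ : 0 < δ) :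
    (1 : ℝ≥0∞) - ENNReal.ofReal ((N : ℝ) * (N + 1) * Real.exp (-2 * M * δ ^ 2))
      ≤ Measure.pi (fun _ : Fin M => ν)
          {t : Fin M → (Fin n → ℝ) |
            |((1 / (N : ℝ) ^ 2) * ∑ i : Fin N, ∑ j : Fin N,
                l i * l j * (ν {s : Fin n → ℝ | ∀ k, max (xs i k) (xs j k) ≤ s k}).toReal)
              - ((1 / (N : ℝ) ^ 2) * ∑ i : Fin N, ∑ j : Fin N,
                l i * l j * ((1 / (M : ℝ)) * ∑ q : Fin M,
                  (if ∀ k, max (xs i k) (xs j k) ≤ t q k then (1:ℝ) else 0)))|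
            ≤ δ * ⨆ i : Fin N, ⨆ j : Fin N, |l i * l j|} :=
  rho_sq_concentration_general n N M hM ν xs l δ hδ
end

section
/- Let V and K be symmetric positive semidefinite real N×N matrices and let γ > 0. Then the matrix V·K + γ·I (the matrix product of V and K plus γ times the identity) is invertible. -/
open scoped Matrix ComplexOrder

/-!
If `(A B + γ) z = 0`, pairing with `B z` gives `⟪Bz, A Bz⟫ + γ ⟪z, B z⟫ = 0`, a sum of two
nonnegative terms. Hence `⟪z, B z⟫ = 0`, so `B z = 0` by positive semidefiniteness, and then
`γ z = 0`.
-/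

namespace Matrix

variable {n 𝕜 : Type*} [Fintype n] [RCLike 𝕜]

theorem IsHermitian.star_mulVec_dotProduct {B : Matrix n n 𝕜} (hB : B.IsHermitian) (z : n → 𝕜) :
    star (B *ᵥ z) ⬝ᵥ z = star z ⬝ᵥ B *ᵥ z := by
  rw [star_mulVec, hB.eq, dotProduct_mulVec]

variable [DecidableEq n]

theorem PosSemidef.eq_zero_of_mul_add_smul_one_mulVec_eq_zero {A B : Matrix n n 𝕜}
    (hA : A.PosSemidef) (hB : B.PosSemidef) {γ : ℝ} (hγ : 0 < γ) {z : n → 𝕜}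
    (hz : (A * B + γ • (1 : Matrix n n 𝕜)) *ᵥ z = 0) : z = 0 := by
  rw [add_mulVec, smul_mulVec, one_mulVec, ← mulVec_mulVec] at hz
  have hsum : star (B *ᵥ z) ⬝ᵥ A *ᵥ (B *ᵥ z) + γ • (star z ⬝ᵥ B *ᵥ z) = 0 := by
    rw [← hB.isHermitian.star_mulVec_dotProduct, ← dotProduct_smul, ← dotProduct_add, hz,
      dotProduct_zero]
  have hBz : B *ᵥ z = 0 := by
    rw [← hB.dotProduct_mulVec_zero_iff]
    have hterms := (add_eq_zero_iff_of_nonneg (hA.dotProduct_mulVec_nonneg _)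
      (smul_nonneg hγ.le (hB.dotProduct_mulVec_nonneg z))).mp hsum
    exact (smul_eq_zero.mp hterms.2).resolve_left hγ.ne'
  rw [hBz, mulVec_zero, zero_add] at hz
  exact (smul_eq_zero.mp hz).resolve_left hγ.ne'

theorem PosSemidef.isUnit_mul_add_smul_one {A B : Matrix n n 𝕜} (hA : A.PosSemidef)
    (hB : B.PosSemidef) {γ : ℝ} (hγ : 0 < γ) : IsUnit (A * B + γ • (1 : Matrix n n 𝕜)) :=
  mulVec_injective_iff_isUnit.mp fun x y hxy => sub_eq_zero.mp <|
    hA.eq_zero_of_mul_add_smul_one_mulVec_eq_zero hB hγ (by rw [mulVec_sub, hxy, sub_self])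

end Matrix

/-- If `V` and `K` are symmetric positive semidefinite real `N×N`
matrices and `γ > 0`, then the matrix `V * K + γ • 1` is invertible. -/
theorem VK_add_gamma_one_isUnit (N : ℕ) (V K : Matrix (Fin N) (Fin N) ℝ)
    (hV : V.PosSemidef) (hK : K.PosSemidef) (γ : ℝ) (hγ : 0 < γ) :
    IsUnit (V * K + γ • (1 : Matrix (Fin N) (Fin N) ℝ)) :=
  hV.isUnit_mul_add_smul_one hK hγ
end
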